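/- There exists a constant C > 0, depending only on n, γ, the weights w and the constants c₁, c₂, but not on u, such that for every u ∈ ℝⁿ the modified Newton direction d at u satisfies ‖d‖₂ ≤ C·‖F(u)‖₂. -/

import Mathlib

open scoped RealInnerProductSpace
open Filter Topology

noncomputable section

abbrev Euc (n : ℕ) := EuclideanSpace ℝ (Fin n)

variable {n : ℕ}

/-- Componentwise soft-thresholding operator `(S_{γw}(v))_k = sgn(v_k)·max(|v_k| − γw_k, 0)`. -/
def soft (γ : ℝ) (w : Fin n → ℝ) (v : Euc n) : Euc n :=
  WithLp.toLp 2 (fun k => Real.sign (v k) * max (|v k| - γ * w k) 0)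

/-- The map `F(u) = u − S_{γw}(u − γ∇g(u))`. -/
def Fm (g : Euc n → ℝ) (γ : ℝ) (w : Fin n → ℝ) (u : Euc n) : Euc n :=
  u - soft γ w (u - γ • gradient g u)

/-- The merit functional `Θ(u) = ‖F(u)‖₂²`. -/
def Th (g : Euc n → ℝ) (γ : ℝ) (w : Fin n → ℝ) (u : Euc n) : ℝ :=
  ‖Fm g γ w u‖ ^ 2

/-- The Hessian of `g` at `u`, applied to `d`: `∇²g(u)d`. -/
def hess (g : Euc n → ℝ) (u d : Euc n) : Euc n :=
  fderiv ℝ (gradient g) u d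

/-- Standing assumptions on `g`: twice continuously differentiable, Lipschitz continuous
second derivative, and uniform bounds `c₁‖h‖² ≤ ⟨∇²g(u)h, h⟩ ≤ c₂‖h‖²`. -/
structure Assump (n : ℕ) (g : Euc n → ℝ) (c₁ c₂ : ℝ) : Prop where
  contDiff : ContDiff ℝ 2 g
  lipHess : ∃ L : NNReal, LipschitzWith L fun u => fderiv ℝ (gradient g) u
  c1_pos : 0 < c₁
  c1_le_c2 : c₁ ≤ c₂
  lower : ∀ u h : Euc n, c₁ * ‖h‖ ^ 2 ≤ ⟪hess g u h, h⟫
  upper : ∀ u h : Euc n, ⟪hess g u h, h⟫ ≤ c₂ * ‖h‖ ^ 2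

/-- `A⁺(u)`. -/
def Ap (g : Euc n → ℝ) (γ : ℝ) (w : Fin n → ℝ) (u : Euc n) : Set (Fin n) :=
  {k | γ * gradient g u k + γ * w k < u k}

/-- `A⁻(u)`. -/
def Am (g : Euc n → ℝ) (γ : ℝ) (w : Fin n → ℝ) (u : Euc n) : Set (Fin n) :=
  {k | u k < γ * gradient g u k - γ * w k}

/-- `A(u) = A⁺(u) ∪ A⁻(u)`. -/
def Aset (g : Euc n → ℝ) (γ : ℝ) (w : Fin n → ℝ) (u : Euc n) : Set (Fin n) :=
  Ap g γ w u ∪ Am g γ w u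

/-- `I°(u)`. -/
def Iz (g : Euc n → ℝ) (γ : ℝ) (w : Fin n → ℝ) (u : Euc n) : Set (Fin n) :=
  {k | γ * gradient g u k - γ * w k < u k ∧ u k < γ * gradient g u k + γ * w k}

/-- `I⁺(u)`. -/
def Ipl (g : Euc n → ℝ) (γ : ℝ) (w : Fin n → ℝ) (u : Euc n) : Set (Fin n) :=
  {k | u k = γ * gradient g u k + γ * w k}

/-- `I⁻(u)`. -/
def Imi (g : Euc n → ℝ) (γ : ℝ) (w : Fin n → ℝ) (u : Euc n) : Set (Fin n) :=
  {k | u k = γ * gradient g u k - γ * w k}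

/-- `A⁺₊(u)`. -/
def App (g : Euc n → ℝ) (γ : ℝ) (w : Fin n → ℝ) (u : Euc n) : Set (Fin n) :=
  {k | γ * gradient g u k + γ * w k < u k ∧ u k < 0}

/-- `A⁻₋(u)`. -/
def Amm (g : Euc n → ℝ) (γ : ℝ) (w : Fin n → ℝ) (u : Euc n) : Set (Fin n) :=
  {k | 0 < u k ∧ u k < γ * gradient g u k - γ * w k}

/-- `I°₊(u)`. -/
def Izp (g : Euc n → ℝ) (γ : ℝ) (w : Fin n → ℝ) (u : Euc n) : Set (Fin n) :=
  {k | γ * gradient g u k - γ * w k < u k ∧ u k < γ * gradient g u k + γ * w k ∧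
    γ * gradient g u k + γ * w k < 0}

/-- `I°₋(u)`. -/
def Izm (g : Euc n → ℝ) (γ : ℝ) (w : Fin n → ℝ) (u : Euc n) : Set (Fin n) :=
  {k | 0 < γ * gradient g u k - γ * w k ∧ γ * gradient g u k - γ * w k < u k ∧
    u k < γ * gradient g u k + γ * w k}

/-- `Ā⁺(u) = A⁺(u) \ A⁺₊(u)`. -/
def ApBar (g : Euc n → ℝ) (γ : ℝ) (w : Fin n → ℝ) (u : Euc n) : Set (Fin n) :=
  Ap g γ w u \ App g γ w u

/-- `Ā⁻(u) = A⁻(u) \ A⁻₋(u)`. -/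
def AmBar (g : Euc n → ℝ) (γ : ℝ) (w : Fin n → ℝ) (u : Euc n) : Set (Fin n) :=
  Am g γ w u \ Amm g γ w u

/-- `Ā(u) = Ā⁺(u) ∪ Ā⁻(u)`. -/
def ABar (g : Euc n → ℝ) (γ : ℝ) (w : Fin n → ℝ) (u : Euc n) : Set (Fin n) :=
  ApBar g γ w u ∪ AmBar g γ w u

/-- `Ī°(u) = I°(u) \ (I°₊(u) ∪ I°₋(u))`. -/
def IzBar (g : Euc n → ℝ) (γ : ℝ) (w : Fin n → ℝ) (u : Euc n) : Set (Fin n) :=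
  Iz g γ w u \ (Izp g γ w u ∪ Izm g γ w u)

/-- `Ī⁺(u) = I⁺(u) ∪ A⁺₊(u) ∪ I°₊(u)`. -/
def IplBar (g : Euc n → ℝ) (γ : ℝ) (w : Fin n → ℝ) (u : Euc n) : Set (Fin n) :=
  Ipl g γ w u ∪ App g γ w u ∪ Izp g γ w u

/-- `Ī⁻(u) = I⁻(u) ∪ A⁻₋(u) ∪ I°₋(u)`. -/
def ImiBar (g : Euc n → ℝ) (γ : ℝ) (w : Fin n → ℝ) (u : Euc n) : Set (Fin n) :=
  Imi g γ w u ∪ Amm g γ w u ∪ Izm g γ w u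

/-- `d` is a modified Newton direction at `u`. -/
def IsModDir (g : Euc n → ℝ) (γ : ℝ) (w : Fin n → ℝ) (u d : Euc n) : Prop :=
  (∀ k ∈ ABar g γ w u, γ * hess g u d k = - Fm g γ w u k) ∧
  (∀ k ∈ IzBar g γ w u, d k = - u k) ∧
  (∀ k ∈ IplBar g γ w u, 0 ≤ d k + u k ∧ 0 ≤ γ * hess g u d k + Fm g γ w u k ∧
    (d k + u k) * (γ * hess g u d k + Fm g γ w u k) = 0) ∧
  (∀ k ∈ ImiBar g γ w u, d k + u k ≤ 0 ∧ γ * hess g u d k + Fm g γ w u k ≤ 0 ∧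
    (d k + u k) * (γ * hess g u d k + Fm g γ w u k) = 0)

/-- `d` is a B-Newton direction at `u` (unmodified index sets). -/
def IsBDir (g : Euc n → ℝ) (γ : ℝ) (w : Fin n → ℝ) (u d : Euc n) : Prop :=
  (∀ k ∈ Aset g γ w u, γ * hess g u d k = - Fm g γ w u k) ∧
  (∀ k ∈ Iz g γ w u, d k = - u k) ∧
  (∀ k ∈ Ipl g γ w u, 0 ≤ d k + u k ∧ 0 ≤ γ * hess g u d k + Fm g γ w u k ∧
    (d k + u k) * (γ * hess g u d k + Fm g γ w u k) = 0) ∧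
  (∀ k ∈ Imi g γ w u, d k + u k ≤ 0 ∧ γ * hess g u d k + Fm g γ w u k ≤ 0 ∧
    (d k + u k) * (γ * hess g u d k + Fm g γ w u k) = 0)

/-- `t = β^l` where `l` is the smallest nonnegative integer satisfying the Armijo inequality. -/
def ArmijoStepsize (g : Euc n → ℝ) (γ : ℝ) (w : Fin n → ℝ) (β σ : ℝ) (u d : Euc n)
    (t : ℝ) : Prop :=
  ∃ l : ℕ, t = β ^ l ∧
    Th g γ w (u + (β ^ l) • d) ≤ (1 - 2 * σ * β ^ l) * Th g γ w u ∧
    ∀ l' < l, ¬ (Th g γ w (u + (β ^ l') • d) ≤ (1 - 2 * σ * β ^ l') * Th g γ w u)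

/-- The modified B-semismooth Newton iteration with Armijo damping. -/
def ModIter (g : Euc n → ℝ) (γ : ℝ) (w : Fin n → ℝ) (β σ : ℝ)
    (useq dseq : ℕ → Euc n) (tseq : ℕ → ℝ) : Prop :=
  (∀ j, IsModDir g γ w (useq j) (dseq j)) ∧
  (∀ j, ArmijoStepsize g γ w β σ (useq j) (dseq j) (tseq j)) ∧
  (∀ j, useq (j + 1) = useq j + tseq j • dseq j)

/-- The B-semismooth Newton iteration (unmodified index sets) with Armijo damping. -/
def BIter (g : Euc n → ℝ) (γ : ℝ) (w : Fin n → ℝ) (β σ : ℝ)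
    (useq dseq : ℕ → Euc n) (tseq : ℕ → ℝ) : Prop :=
  (∀ j, IsBDir g γ w (useq j) (dseq j)) ∧
  (∀ j, ArmijoStepsize g γ w β σ (useq j) (dseq j) (tseq j)) ∧
  (∀ j, useq (j + 1) = useq j + tseq j • dseq j)
/-! Split a modified Newton direction `d` as `d = s + t`, where `t` keeps the coordinates on which
the Newton equation `γ (∇²g(u) d)_k = -F_k(u)` holds. On every other coordinate the
complementarity conditions force `d_k = -u_k`, and there `|u_k| ≤ |F_k(u)|`, so `‖s‖ ≤ ‖F(u)‖`.
Pairing the Newton equation with `t` gives `γ ⟪∇²g(u) d, t⟫ = -⟪F(u), t⟫`; strong convexity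
`c₁ ‖t‖² ≤ ⟪∇²g(u) t, t⟫` together with `‖∇²g(u)‖ ≤ c₂` (the Hessian is symmetric) then yields
`c₁ ‖t‖ ≤ (1/γ + c₂) ‖F(u)‖`. -/

section Hessian

open InnerProductSpace

variable {F : Type*} [NormedAddCommGroup F] [InnerProductSpace ℝ F] [CompleteSpace F]
  {g : F → ℝ} {u : F}

theorem inner_fderiv_gradient_apply (hg : ContDiffAt ℝ 2 g u) (x y : F) :
    ⟪fderiv ℝ (gradient g) u x, y⟫ = fderiv ℝ (fderiv ℝ g) u x y := by
  let e : StrongDual ℝ F ≃L[ℝ] F := (toDual ℝ F).symm.toContinuousLinearEquiv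
  have hd : DifferentiableAt ℝ (fderiv ℝ g) u :=
    (hg.fderiv_right (m := 1) le_rfl).differentiableAt one_ne_zero
  have : fderiv ℝ (gradient g) u = e.toContinuousLinearMap.comp (fderiv ℝ (fderiv ℝ g) u) :=
    (e.hasFDerivAt.comp u hd.hasFDerivAt).fderiv
  rw [this]
  exact toDual_symm_apply

theorem isSymmetric_fderiv_gradient (hg : ContDiffAt ℝ 2 g u) :
    (fderiv ℝ (gradient g) u : F →ₗ[ℝ] F).IsSymmetric := by
  intro x y
  rw [← real_inner_comm x]
  simp only [ContinuousLinearMap.coe_coe]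
  rw [inner_fderiv_gradient_apply hg, inner_fderiv_gradient_apply hg]
  exact (hg.isSymmSndFDerivAt (by simp)).eq x y

end Hessian

theorem ContinuousLinearMap.opNorm_le_of_isSymmetric {𝕜 E : Type*} [RCLike 𝕜]
    [NormedAddCommGroup E] [InnerProductSpace 𝕜 E] {T : E →L[𝕜] E}
    (hT : (T : E →ₗ[𝕜] E).IsSymmetric) {c : ℝ} (hc : 0 ≤ c)
    (h : ∀ x, |RCLike.re (inner 𝕜 (T x) x)| ≤ c * ‖x‖ ^ 2) : ‖T‖ ≤ c := by
  rw [T.norm_eq_iSup_rayleighQuotient hT]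
  refine ciSup_le fun x => ?_
  rw [rayleighQuotient, reApplyInnerSelf_apply, abs_div, abs_sq]
  rcases eq_or_ne x 0 with rfl | hx
  · simpa using hc
  · exact div_le_of_le_mul₀ (by positivity) hc (h x)

theorem Assump.norm_fderiv_gradient_le {c₁ c₂ : ℝ} {g : Euc n → ℝ} (hg : Assump n g c₁ c₂)
    (u : Euc n) : ‖fderiv ℝ (gradient g) u‖ ≤ c₂ := by
  have hc₂ : 0 ≤ c₂ := hg.c1_pos.le.trans hg.c1_le_c2
  refine ContinuousLinearMap.opNorm_le_of_isSymmetric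
    (isSymmetric_fderiv_gradient hg.contDiff.contDiffAt) hc₂ fun h => ?_
  have hlower := (mul_nonneg hg.c1_pos.le (sq_nonneg ‖h‖)).trans (hg.lower u h)
  rw [RCLike.re_to_real]
  exact (abs_of_nonneg hlower).trans_le (hg.upper u h)

theorem EuclideanSpace.norm_le_norm_of_abs_le {ι : Type*} [Fintype ι] {x y : EuclideanSpace ℝ ι}
    (h : ∀ k, |x k| ≤ |y k|) : ‖x‖ ≤ ‖y‖ := by
  rw [EuclideanSpace.norm_eq, EuclideanSpace.norm_eq]
  gcongr with k
  exact h k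

theorem EuclideanSpace.norm_le_of_forall_eq_or_abs_le {ι : Type*} [Fintype ι]
    {M : EuclideanSpace ℝ ι →L[ℝ] EuclideanSpace ℝ ι} {c₁ c₂ γ : ℝ} {d r : EuclideanSpace ℝ ι}
    (hc₁ : 0 < c₁) (hM_lower : ∀ h, c₁ * ‖h‖ ^ 2 ≤ ⟪M h, h⟫) (hM : ‖M‖ ≤ c₂) (hγ : 0 < γ)
    (h : ∀ k, γ * M d k = -r k ∨ |d k| ≤ |r k|) : ‖d‖ ≤ (1 + (γ⁻¹ + c₂) / c₁) * ‖r‖ := by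
  classical
  set t : EuclideanSpace ℝ ι := WithLp.toLp 2 fun k => if γ * M d k = -r k then d k else 0
  have hs : ‖d - t‖ ≤ ‖r‖ := norm_le_norm_of_abs_le fun k => by
    by_cases hk : γ * M d k = -r k
    · simp [t, hk]
    · simpa [t, hk] using (h k).resolve_left hk
  have hMdt : γ * ⟪M d, t⟫ = -⟪r, t⟫ := by
    simp only [PiLp.inner_apply, Finset.mul_sum, ← Finset.sum_neg_distrib, RCLike.inner_apply,
      conj_trivial]
    refine Finset.sum_congr rfl fun k _ => ?_
    by_cases hk : γ * M d k = -r k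
    · simp only [t, hk, if_true]
      linear_combination d k * hk
    · simp [t, hk]
  have hc₂ : 0 ≤ c₂ := (norm_nonneg M).trans hM
  have key : c₁ * ‖t‖ ^ 2 ≤ (γ⁻¹ + c₂) * ‖r‖ * ‖t‖ := calc
    c₁ * ‖t‖ ^ 2 ≤ ⟪M t, t⟫ := hM_lower t
    _ = γ⁻¹ * ⟪-r, t⟫ - ⟪M (d - t), t⟫ := by
      rw [map_sub, inner_sub_left, inner_neg_left, ← hMdt]
      field_simp
      ring
    _ ≤ γ⁻¹ * (‖r‖ * ‖t‖) + c₂ * ‖r‖ * ‖t‖ := by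
      have hrt : ⟪-r, t⟫ ≤ ‖r‖ * ‖t‖ := (real_inner_le_norm _ _).trans_eq (by rw [norm_neg])
      have hMst : -⟪M (d - t), t⟫ ≤ c₂ * ‖r‖ * ‖t‖ := calc
        -⟪M (d - t), t⟫ ≤ ‖M (d - t)‖ * ‖t‖ := (neg_le_abs _).trans (abs_real_inner_le_norm _ _)
        _ ≤ ‖M‖ * ‖d - t‖ * ‖t‖ := by gcongr; exact M.le_opNorm _
        _ ≤ c₂ * ‖r‖ * ‖t‖ := by gcongr
      have := mul_le_mul_of_nonneg_left hrt (inv_nonneg.2 hγ.le)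
      linarith
    _ = (γ⁻¹ + c₂) * ‖r‖ * ‖t‖ := by ring
  have ht : ‖t‖ ≤ (γ⁻¹ + c₂) / c₁ * ‖r‖ := by
    rcases (norm_nonneg t).eq_or_lt with h0 | h0
    · rw [← h0]; positivity
    · rw [div_mul_eq_mul_div, le_div_iff₀ hc₁]
      nlinarith
  calc ‖d‖ = ‖(d - t) + t‖ := by rw [sub_add_cancel]
    _ ≤ ‖d - t‖ + ‖t‖ := norm_add_le _ _
    _ ≤ (1 + (γ⁻¹ + c₂) / c₁) * ‖r‖ := by linarith

section IndexSets

variable {g : Euc n → ℝ} {γ : ℝ} {w : Fin n → ℝ} {u d : Euc n} {k : Fin n}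

theorem ABar_union_IzBar_union_IplBar_union_ImiBar :
    ABar g γ w u ∪ IzBar g γ w u ∪ IplBar g γ w u ∪ ImiBar g γ w u = Set.univ := by
  ext k
  simp only [ABar, ApBar, AmBar, IzBar, IplBar, ImiBar, Ap, Am, App, Amm, Iz, Izp, Izm, Ipl, Imi,
    Set.mem_union, Set.mem_sdiff, Set.mem_ofPred_eq, Set.mem_univ, iff_true]
  grind

theorem Fm_apply (k : Fin n) : Fm g γ w u k =
    u k - Real.sign (u k - γ * gradient g u k) * max (|u k - γ * gradient g u k| - γ * w k) 0 := by
  simp [Fm, soft]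

theorem Fm_apply_of_abs_le (h : |u k - γ * gradient g u k| ≤ γ * w k) : Fm g γ w u k = u k := by
  rw [Fm_apply, max_eq_right (by linarith), mul_zero, sub_zero]

theorem Fm_apply_of_mem_Ap (hγw : 0 ≤ γ * w k) (hk : k ∈ Ap g γ w u) :
    Fm g γ w u k = γ * gradient g u k + γ * w k := by
  have hk : γ * gradient g u k + γ * w k < u k := hk
  have hpos : 0 < u k - γ * gradient g u k := by linarith
  rw [Fm_apply, Real.sign_of_pos hpos, abs_of_pos hpos, max_eq_left (by linarith)]
  ring

theorem Fm_apply_of_mem_Am (hγw : 0 ≤ γ * w k) (hk : k ∈ Am g γ w u) :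
    Fm g γ w u k = γ * gradient g u k - γ * w k := by
  have hk : u k < γ * gradient g u k - γ * w k := hk
  have hneg : u k - γ * gradient g u k < 0 := by linarith
  rw [Fm_apply, Real.sign_of_neg hneg, abs_of_neg hneg, max_eq_left (by linarith)]
  ring

theorem Fm_apply_of_mem_Iz (hk : k ∈ Iz g γ w u) : Fm g γ w u k = u k :=
  Fm_apply_of_abs_le (abs_le.2 ⟨by linarith [hk.1], by linarith [hk.2]⟩)

theorem abs_le_abs_Fm_of_mem_IplBar (hγw : 0 ≤ γ * w k) (hk : k ∈ IplBar g γ w u) :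
    |u k| ≤ |Fm g γ w u k| := by
  rcases hk with (hk | hk) | hk
  · have hk : u k = γ * gradient g u k + γ * w k := hk
    rw [Fm_apply_of_abs_le (by rw [hk, add_sub_cancel_left, abs_of_nonneg hγw])]
  · rw [Fm_apply_of_mem_Ap hγw hk.1, abs_of_neg hk.2, abs_of_neg (hk.1.trans hk.2)]
    linarith [hk.1]
  · rw [Fm_apply_of_mem_Iz ⟨hk.1, hk.2.1⟩]

theorem abs_le_abs_Fm_of_mem_ImiBar (hγw : 0 ≤ γ * w k) (hk : k ∈ ImiBar g γ w u) :
    |u k| ≤ |Fm g γ w u k| := by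
  rcases hk with (hk | hk) | hk
  · have hk : u k = γ * gradient g u k - γ * w k := hk
    rw [Fm_apply_of_abs_le (by rw [hk, sub_sub_cancel_left, abs_neg, abs_of_nonneg hγw])]
  · rw [Fm_apply_of_mem_Am hγw hk.2, abs_of_pos hk.1, abs_of_pos (hk.1.trans hk.2)]
    linarith [hk.2]
  · rw [Fm_apply_of_mem_Iz hk.2]

theorem IsModDir.eq_or_abs_le (hd : IsModDir g γ w u d) (hγw : 0 ≤ γ * w k) :
    γ * hess g u d k = -Fm g γ w u k ∨ |d k| ≤ |Fm g γ w u k| := by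
  obtain ⟨hA, hIz, hIpl, hImi⟩ := hd
  have of_complementarity (hc : (d k + u k) * (γ * hess g u d k + Fm g γ w u k) = 0)
      (hu : |u k| ≤ |Fm g γ w u k|) :
      γ * hess g u d k = -Fm g γ w u k ∨ |d k| ≤ |Fm g γ w u k| := by
    rcases mul_eq_zero.1 hc with h | h
    · right
      rwa [eq_neg_of_add_eq_zero_left h, abs_neg]
    · exact .inl (eq_neg_of_add_eq_zero_left h)
  have hk : k ∈ ABar g γ w u ∪ IzBar g γ w u ∪ IplBar g γ w u ∪ ImiBar g γ w u := by
    rw [ABar_union_IzBar_union_IplBar_union_ImiBar]; trivial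
  rcases hk with ((hk | hk) | hk) | hk
  · exact .inl (hA k hk)
  · right
    rw [hIz k hk, abs_neg, Fm_apply_of_mem_Iz hk.1]
  · exact of_complementarity (hIpl k hk).2.2 (abs_le_abs_Fm_of_mem_IplBar hγw hk)
  · exact of_complementarity (hImi k hk).2.2 (abs_le_abs_Fm_of_mem_ImiBar hγw hk)

end IndexSets

theorem stmt10_general {n : ℕ} (c₁ c₂ : ℝ) (g : Euc n → ℝ) (hg : Assump n g c₁ c₂)
    (w : Fin n → ℝ) (hw : ∀ k, 0 < w k) (γ : ℝ) (hγ : 0 < γ) :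
    ∃ C : ℝ, 0 < C ∧
      ∀ u d : Euc n, IsModDir g γ w u d → ‖d‖ ≤ C * ‖Fm g γ w u‖ := by
  have hc₁ := hg.c1_pos
  have hc₂ : 0 < c₂ := hc₁.trans_le hg.c1_le_c2
  refine ⟨1 + (γ⁻¹ + c₂) / c₁, by positivity, fun u d hd => ?_⟩
  exact EuclideanSpace.norm_le_of_forall_eq_or_abs_le hc₁ (hg.lower u) (hg.norm_fderiv_gradient_le u)
    hγ fun k => hd.eq_or_abs_le (mul_pos hγ (hw k)).le

/-- uniform bound `‖d‖ ≤ C‖F(u)‖` for the modified Newton direction. -/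
theorem stmt10 {n : ℕ} (hn : 1 ≤ n) (c₁ c₂ : ℝ) (g : Euc n → ℝ) (hg : Assump n g c₁ c₂)
    (w : Fin n → ℝ) (hw : ∀ k, 0 < w k) (γ : ℝ) (hγ : 0 < γ) :
    ∃ C : ℝ, 0 < C ∧
      ∀ u d : Euc n, IsModDir g γ w u d → ‖d‖ ≤ C * ‖Fm g γ w u‖ :=
  stmt10_general c₁ c₂ g hg w hw γ hγ
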